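/- arXiv:1103.5289 — 5 statements merged into one kernel-verified Lean document; each statement's English description precedes it below -/
import Mathlib

section
/- Let (X,≤) be a partially ordered set with a metric d, and let F : X × X → X be a generalized symmetric Meir–Keeler operator. Define T : X × X → X × X by T(x,y) = (F(x,y), F(y,x)) and d₂ on X × X by d₂((x,y),(u,v)) = (1/2)[d(x,u)+d(y,v)]. Then for all Y, V ∈ X × X with Y > V in the product order (i.e. V ≤ Y and V ≠ Y), one has d₂(T(Y), T(V)) < d₂(Y, V). -/
/-- F is a generalized symmetric Meir–Keeler operator. -/
def GenSymMeirKeeler {X : Type*} [PartialOrder X] [MetricSpace X] (F : X → X → X) : Prop :=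
  ∀ ε > (0 : ℝ), ∃ δ > (0 : ℝ), ∀ x y u v : X, u ≤ x → y ≤ v →
    ε ≤ (dist x u + dist y v) / 2 → (dist x u + dist y v) / 2 < ε + δ →
    (dist (F x y) (F u v) + dist (F y x) (F v u)) / 2 < ε

/-- The partial order on X × X: (u,v) ≤ (x,y) ⇔ u ≤ x and y ≤ v. -/
def ProdLE {X : Type*} [PartialOrder X] (p q : X × X) : Prop :=
  p.1 ≤ q.1 ∧ q.2 ≤ p.2

/-- The metric d₂ on X × X. -/
noncomputable def d2 {X : Type*} [MetricSpace X] (p q : X × X) : ℝ :=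
  (dist p.1 q.1 + dist p.2 q.2) / 2

/-- The operator T(x,y) = (F(x,y), F(y,x)). -/
def coupledMap {X : Type*} (F : X → X → X) (p : X × X) : X × X :=
  (F p.1 p.2, F p.2 p.1)

theorem strict_contraction_on_comparable
    {X : Type*} [PartialOrder X] [MetricSpace X]
    (F : X → X → X)
    (hMK : GenSymMeirKeeler F) :
    ∀ Y V : X × X, ProdLE V Y → V ≠ Y →
      d2 (coupledMap F Y) (coupledMap F V) < d2 Y V := by
  intro Y V hle hne
  have hpos : 0 < d2 Y V := by
    have h1 : Y.1 ≠ V.1 ∨ Y.2 ≠ V.2 := by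
      by_contra h
      push_neg at h
      exact hne (Prod.ext h.1.symm h.2.symm)
    have d1 : 0 ≤ dist Y.1 V.1 := dist_nonneg
    have d2' : 0 ≤ dist Y.2 V.2 := dist_nonneg
    rcases h1 with h | h
    · have := dist_pos.mpr h
      unfold d2; linarith
    · have := dist_pos.mpr h
      unfold d2; linarith
  obtain ⟨δ, hδ, h⟩ := hMK (d2 Y V) hpos
  have := h Y.1 Y.2 V.1 V.2 hle.1 hle.2 (by simp [d2]) (by simp only [d2] at hpos ⊢; linarith)
  simpa [d2, coupledMap] using this
end

section
/- Let (X,≤) be a partially ordered set with a metric d, let F : X × X → X be a generalized symmetric Meir–Keeler operator, and define T : X × X → X × X by T(x,y) = (F(x,y), F(y,x)) and d₂ on X × X by d₂((x,y),(u,v)) = (1/2)[d(x,u)+d(y,v)]. If Y, V ∈ X × X are comparable in the product order, then lim_{n→∞} d₂(Tⁿ(Y), Tⁿ(V)) = 0, where Tⁿ denotes the n-th iterate of T. (In particular, the sequence of diagonal iterates is asymptotically contractive on comparable pairs.) -/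
/-- F has the mixed monotone property. -/
def MixedMonotone {X : Type*} [PartialOrder X] (F : X → X → X) : Prop :=
  (∀ y : X, Monotone (fun x => F x y)) ∧ (∀ x : X, Antitone (fun y => F x y))

lemma d2_nonneg {X : Type*} [MetricSpace X] (p q : X × X) : 0 ≤ d2 p q := by
  unfold d2; positivity

lemma d2_symm {X : Type*} [MetricSpace X] (p q : X × X) : d2 p q = d2 q p := by
  unfold d2; rw [dist_comm, dist_comm p.2]

lemma prodle_step {X : Type*} [PartialOrder X] (F : X → X → X)
    (hmm : MixedMonotone F) {p q : X × X} (h : ProdLE p q) :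
    ProdLE (coupledMap F p) (coupledMap F q) :=
  ⟨le_trans (hmm.1 p.2 h.1) (hmm.2 q.1 h.2),
   le_trans (hmm.1 q.1 h.2) (hmm.2 p.2 h.1)⟩

lemma contract_le {X : Type*} [PartialOrder X] [MetricSpace X] (F : X → X → X)
    (hMK : GenSymMeirKeeler F) {p q : X × X} (h : ProdLE p q) :
    d2 (coupledMap F q) (coupledMap F p) ≤ d2 q p := by
  rcases eq_or_lt_of_le (d2_nonneg q p) with h0 | hpos
  · have h1 : dist q.1 p.1 = 0 ∧ dist q.2 p.2 = 0 := by
      constructor <;> nlinarith [dist_nonneg (x := q.1) (y := p.1),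
        dist_nonneg (x := q.2) (y := p.2), h0.symm ▸ (rfl : d2 q p = d2 q p),
        (by unfold d2 at h0; linarith : dist q.1 p.1 + dist q.2 p.2 = 0)]
    have e1 : q.1 = p.1 := dist_eq_zero.mp h1.1
    have e2 : q.2 = p.2 := dist_eq_zero.mp h1.2
    have : q = p := Prod.ext e1 e2
    rw [this]
    simp [d2]
  · obtain ⟨δ, hδ, hmk⟩ := hMK _ hpos
    have := hmk q.1 q.2 p.1 p.2 h.1 h.2 (le_of_eq rfl)
      (by unfold d2; linarith)
    exact le_of_lt (this)

lemma contract_lt {X : Type*} [PartialOrder X] [MetricSpace X] (F : X → X → X)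
    {p q : X × X} (h : ProdLE p q) {ε δ : ℝ}
    (hmk : ∀ x y u v : X, u ≤ x → y ≤ v →
      ε ≤ (dist x u + dist y v) / 2 → (dist x u + dist y v) / 2 < ε + δ →
      (dist (F x y) (F u v) + dist (F y x) (F v u)) / 2 < ε)
    (hlo : ε ≤ d2 q p) (hhi : d2 q p < ε + δ) :
    d2 (coupledMap F q) (coupledMap F p) < ε :=
  hmk q.1 q.2 p.1 p.2 h.1 h.2 hlo hhi

theorem iterates_distance_tendsto_zero_on_comparable
    {X : Type*} [PartialOrder X] [MetricSpace X]
    (F : X → X → X)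
    (hmm : MixedMonotone F)
    (hMK : GenSymMeirKeeler F) :
    ∀ Y V : X × X, (ProdLE Y V ∨ ProdLE V Y) →
      Filter.Tendsto (fun n => d2 ((coupledMap F)^[n] Y) ((coupledMap F)^[n] V))
        Filter.atTop (nhds 0) := by
  have aux : ∀ p q : X × X, ProdLE p q →
      Filter.Tendsto (fun n => d2 ((coupledMap F)^[n] q) ((coupledMap F)^[n] p))
        Filter.atTop (nhds 0) := by
    intro p q h
    set T := coupledMap F with hT
    set a : ℕ → ℝ := fun n => d2 (T^[n] q) (T^[n] p) with ha
    have hcomp : ∀ n, ProdLE (T^[n] p) (T^[n] q) := by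
      intro n
      induction n with
      | zero => exact h
      | succ n ih =>
        rw [Function.iterate_succ_apply', Function.iterate_succ_apply']
        exact prodle_step F hmm ih
    have hanti : Antitone a := by
      apply antitone_nat_of_succ_le
      intro n
      have := contract_le F hMK (hcomp n)
      simpa [ha, Function.iterate_succ_apply'] using this
    have hbdd : BddBelow (Set.range a) := by
      refine ⟨0, ?_⟩
      rintro x ⟨n, rfl⟩
      exact d2_nonneg _ _
    have hlim : Filter.Tendsto a Filter.atTop (nhds (⨅ n, a n)) :=
      tendsto_atTop_ciInf hanti hbdd
    have hLnn : 0 ≤ ⨅ n, a n := le_ciInf fun n => d2_nonneg _ _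
    have hL0 : (⨅ n, a n) = 0 := by
      by_contra hne
      have hLpos : 0 < ⨅ n, a n := lt_of_le_of_ne hLnn (Ne.symm hne)
      obtain ⟨δ, hδ, hmk⟩ := hMK _ hLpos
      obtain ⟨n, hn⟩ := exists_lt_of_ciInf_lt (lt_add_of_pos_right (⨅ n, a n) hδ)
      have hge : (⨅ n, a n) ≤ a n := ciInf_le hbdd n
      have hlt : a (n + 1) < ⨅ n, a n := by
        have := contract_lt F (hcomp n) hmk hge hn
        simpa [ha, Function.iterate_succ_apply'] using this
      exact absurd (ciInf_le hbdd (n + 1)) (not_le.mpr hlt)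
    rwa [hL0] at hlim
  intro Y V hYV
  rcases hYV with hc | hc
  · have := aux Y V hc
    have heq : (fun n => d2 ((coupledMap F)^[n] Y) ((coupledMap F)^[n] V)) =
        (fun n => d2 ((coupledMap F)^[n] V) ((coupledMap F)^[n] Y)) := by
      funext n; exact d2_symm _ _
    rwa [heq]
  · exact aux V Y hc
end

section
/- Let (X,≤) be a partially ordered set with a metric d, and let F : X × X → X have the mixed monotone property and be a generalized symmetric Meir–Keeler operator. Suppose x₀, y₀ ∈ X satisfy x₀ ≤ F(x₀,y₀) and y₀ ≥ F(y₀,x₀), and define the sequences x_{n+1} = F(x_n,y_n) and y_{n+1} = F(y_n,x_n). Then the sequence of nonnegative numbers η_n = (1/2)[d(x_n,x_{n-1}) + d(y_n,y_{n-1})] is nonincreasing and converges to 0, i.e. lim_{n→∞} (1/2)[d(x_{n+1},x_n) + d(y_{n+1},y_n)] = 0. -/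
theorem picard_increments_antitone_tendsto_zero
    {X : Type*} [PartialOrder X] [MetricSpace X]
    (F : X → X → X)
    (hmm : MixedMonotone F)
    (hMK : GenSymMeirKeeler F)
    (x y : ℕ → X)
    (hx : ∀ n : ℕ, x (n + 1) = F (x n) (y n))
    (hy : ∀ n : ℕ, y (n + 1) = F (y n) (x n))
    (hinit : x 0 ≤ F (x 0) (y 0) ∧ F (y 0) (x 0) ≤ y 0) :
    Antitone (fun n => (dist (x (n + 1)) (x n) + dist (y (n + 1)) (y n)) / 2) ∧
    Filter.Tendsto (fun n => (dist (x (n + 1)) (x n) + dist (y (n + 1)) (y n)) / 2)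
      Filter.atTop (nhds 0) := by
  obtain ⟨hx0, hy0⟩ := hinit
  have hmono : ∀ n, x n ≤ x (n + 1) ∧ y (n + 1) ≤ y n := by
    intro n
    induction n with
    | zero => exact ⟨by rw [hx 0]; exact hx0, by rw [hy 0]; exact hy0⟩
    | succ n ih =>
      obtain ⟨h1, h2⟩ := ih
      constructor
      · calc x (n + 1) = F (x n) (y n) := hx n
          _ ≤ F (x (n + 1)) (y n) := hmm.1 (y n) h1
          _ ≤ F (x (n + 1)) (y (n + 1)) := hmm.2 (x (n + 1)) h2
          _ = x (n + 2) := (hx (n + 1)).symm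
      · calc y (n + 2) = F (y (n + 1)) (x (n + 1)) := hy (n + 1)
          _ ≤ F (y (n + 1)) (x n) := hmm.2 (y (n + 1)) h1
          _ ≤ F (y n) (x n) := hmm.1 (x n) h2
          _ = y (n + 1) := (hy n).symm
  set η : ℕ → ℝ := fun n => (dist (x (n + 1)) (x n) + dist (y (n + 1)) (y n)) / 2 with hηdef
  have hηnn : ∀ n, 0 ≤ η n := fun n => by
    have := dist_nonneg (x := x (n + 1)) (y := x n)
    have := dist_nonneg (x := y (n + 1)) (y := y n)
    simp only [hηdef]; linarith
  have happly : ∀ ε > (0 : ℝ), ∀ δ > (0 : ℝ),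
      (∀ a b u v : X, u ≤ a → b ≤ v →
        ε ≤ (dist a u + dist b v) / 2 → (dist a u + dist b v) / 2 < ε + δ →
        (dist (F a b) (F u v) + dist (F b a) (F v u)) / 2 < ε) →
      ∀ n, ε ≤ η n → η n < ε + δ → η (n + 1) < ε := by
    intro ε hε δ hδ h n h1 h2
    have := h (x (n + 1)) (y (n + 1)) (x n) (y n) (hmono n).1 (hmono n).2 h1 h2
    simpa only [hηdef, hx (n + 1), hy (n + 1), hx n, hy n] using this
  have hsucc : ∀ n, η (n + 1) ≤ η n := by
    intro n
    rcases eq_or_lt_of_le (hηnn n) with h0 | hpos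
    · have hd1 : dist (x (n + 1)) (x n) = 0 := by
        have h1 := dist_nonneg (x := x (n + 1)) (y := x n)
        have h2 := dist_nonneg (x := y (n + 1)) (y := y n)
        have : (dist (x (n + 1)) (x n) + dist (y (n + 1)) (y n)) / 2 = 0 := h0.symm
        linarith
      have hd2 : dist (y (n + 1)) (y n) = 0 := by
        have h1 := dist_nonneg (x := x (n + 1)) (y := x n)
        have : (dist (x (n + 1)) (x n) + dist (y (n + 1)) (y n)) / 2 = 0 := h0.symm
        linarith
      have hxeq : x (n + 1) = x n := by rwa [dist_eq_zero] at hd1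
      have hyeq : y (n + 1) = y n := by rwa [dist_eq_zero] at hd2
      have hx2 : x (n + 2) = x (n + 1) := by
        rw [hx (n + 1), hxeq, hyeq]; exact (hx n).symm.trans hxeq
      have hy2 : y (n + 2) = y (n + 1) := by
        rw [hy (n + 1), hxeq, hyeq]; exact (hy n).symm.trans hyeq
      have : η (n + 1) = 0 := by simp [hηdef, hx2, hy2]
      rw [this, ← h0]
    · obtain ⟨δ, hδ, hMK'⟩ := hMK (η n) hpos
      exact le_of_lt (happly (η n) hpos δ hδ hMK' n le_rfl (by linarith))
  have hant : Antitone η := antitone_nat_of_succ_le hsucc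
  refine ⟨hant, ?_⟩
  have hbdd : BddBelow (Set.range η) := ⟨0, by rintro r ⟨n, rfl⟩; exact hηnn n⟩
  have htend : Filter.Tendsto η Filter.atTop (nhds (⨅ n, η n)) :=
    tendsto_atTop_ciInf hant hbdd
  set L : ℝ := ⨅ n, η n with hLdef
  have hLle : ∀ n, L ≤ η n := fun n => ciInf_le hbdd n
  have hL0 : 0 ≤ L := le_ciInf hηnn
  have hLeq : L = 0 := by
    by_contra hne
    have hLpos : 0 < L := lt_of_le_of_ne hL0 (Ne.symm hne)
    obtain ⟨δ, hδ, hMK'⟩ := hMK L hLpos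
    obtain ⟨n, hn⟩ := (htend.eventually (gt_mem_nhds (lt_add_of_pos_right L hδ))).exists
    have : η (n + 1) < L := happly L hLpos δ hδ hMK' n (hLle n) hn
    exact absurd (hLle (n + 1)) (not_le.mpr this)
  rw [hLeq] at htend
  exact htend
end

section
/- Let (X,≤) be a partially ordered set with a metric d, and let F : X × X → X have the mixed monotone property and be a generalized symmetric Meir–Keeler operator. Suppose x₀, y₀ ∈ X satisfy x₀ ≤ F(x₀,y₀) and y₀ ≥ F(y₀,x₀), and define x_{n+1} = F(x_n,y_n), y_{n+1} = F(y_n,x_n). Then the sequence Z_n = (x_n,y_n) is a Cauchy sequence in X × X with respect to the metric d₂((x,y),(u,v)) = (1/2)[d(x,u)+d(y,v)]. -/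
theorem picard_sequence_cauchy
    {X : Type*} [PartialOrder X] [MetricSpace X]
    (F : X → X → X)
    (hmm : MixedMonotone F)
    (hMK : GenSymMeirKeeler F)
    (x y : ℕ → X)
    (hx : ∀ n : ℕ, x (n + 1) = F (x n) (y n))
    (hy : ∀ n : ℕ, y (n + 1) = F (y n) (x n))
    (hinit : x 0 ≤ F (x 0) (y 0) ∧ F (y 0) (x 0) ≤ y 0) :
    ∀ ε > (0 : ℝ), ∃ N : ℕ, ∀ m ≥ N, ∀ n ≥ N,
      d2 (x m, y m) (x n, y n) < ε := by
  obtain ⟨hmono, hanti⟩ := hmm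
  -- step monotonicity of the iterates
  have hstep : ∀ n, x n ≤ x (n + 1) ∧ y (n + 1) ≤ y n := by
    intro n
    induction n with
    | zero => exact ⟨(hx 0) ▸ hinit.1, (hy 0) ▸ hinit.2⟩
    | succ n ih =>
      constructor
      · calc x (n + 1) = F (x n) (y n) := hx n
          _ ≤ F (x (n + 1)) (y n) := hmono (y n) ih.1
          _ ≤ F (x (n + 1)) (y (n + 1)) := hanti (x (n + 1)) ih.2
          _ = x (n + 1 + 1) := (hx (n + 1)).symm
      · calc y (n + 1 + 1) = F (y (n + 1)) (x (n + 1)) := hy (n + 1)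
          _ ≤ F (y (n + 1)) (x n) := hanti (y (n + 1)) ih.1
          _ ≤ F (y n) (x n) := hmono (x n) ih.2
          _ = y (n + 1) := (hy n).symm
  have hxm : Monotone x := monotone_nat_of_le_succ fun n => (hstep n).1
  have hya : Antitone y := antitone_nat_of_succ_le fun n => (hstep n).2
  set s : ℕ → ℝ := fun n => (dist (x (n + 1)) (x n) + dist (y (n + 1)) (y n)) / 2 with hs
  have hs0 : ∀ n, 0 ≤ s n := by
    intro n; simp only [hs]; positivity
  have hsanti : ∀ n, s (n + 1) ≤ s n := by
    intro n
    rcases eq_or_lt_of_le (hs0 n) with h | h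
    · -- s n = 0 : the sequence has stabilized
      have hd1 : dist (x (n + 1)) (x n) = 0 := by
        have h' : (dist (x (n + 1)) (x n) + dist (y (n + 1)) (y n)) / 2 = 0 := h.symm
        have := dist_nonneg (x := x (n + 1)) (y := x n)
        have := dist_nonneg (x := y (n + 1)) (y := y n)
        linarith
      have hd2 : dist (y (n + 1)) (y n) = 0 := by
        have h' : (dist (x (n + 1)) (x n) + dist (y (n + 1)) (y n)) / 2 = 0 := h.symm
        have := dist_nonneg (x := x (n + 1)) (y := x n)
        have := dist_nonneg (x := y (n + 1)) (y := y n)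
        linarith
      have hx1 : x (n + 1) = x n := by rwa [dist_eq_zero] at hd1
      have hy1 : y (n + 1) = y n := by rwa [dist_eq_zero] at hd2
      have hx2 : x (n + 2) = x (n + 1) := by rw [hx (n + 1), hx1, hy1, ← hx n, hx1]
      have hy2 : y (n + 2) = y (n + 1) := by rw [hy (n + 1), hx1, hy1, ← hy n, hy1]
      have : s (n + 1) = 0 := by
        simp only [hs]
        rw [show n + 1 + 1 = n + 2 from rfl, hx2, hy2]
        simp
      rw [this]; exact hs0 n
    · obtain ⟨δ, hδ, hMK'⟩ := hMK (s n) h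
      have hkey := hMK' (x (n + 1)) (y (n + 1)) (x n) (y n) (hstep n).1 (hstep n).2
        le_rfl (by
          have hseq : s n = (dist (x (n + 1)) (x n) + dist (y (n + 1)) (y n)) / 2 := rfl
          linarith)
      rw [← hx (n + 1), ← hy (n + 1), ← hx n, ← hy n] at hkey
      exact le_of_lt hkey
  have hsA : Antitone s := antitone_nat_of_succ_le hsanti
  have hbdd : BddBelow (Set.range s) := ⟨0, by rintro _ ⟨n, rfl⟩; exact hs0 n⟩
  have hr_le : ∀ n, (⨅ k, s k) ≤ s n := fun n => ciInf_le hbdd n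
  have hr0 : (0 : ℝ) ≤ ⨅ k, s k := le_ciInf hs0
  have hrz : (⨅ k, s k) = 0 := by
    by_contra hne
    have hrpos : 0 < ⨅ k, s k := lt_of_le_of_ne hr0 (Ne.symm hne)
    obtain ⟨δ, hδ, hMK'⟩ := hMK _ hrpos
    obtain ⟨n, hn⟩ := exists_lt_of_ciInf_lt (show (⨅ k, s k) < (⨅ k, s k) + δ by linarith)
    have hkey := hMK' (x (n + 1)) (y (n + 1)) (x n) (y n) (hstep n).1 (hstep n).2
      (hr_le n) hn
    rw [← hx (n + 1), ← hy (n + 1), ← hx n, ← hy n] at hkey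
    exact absurd (hr_le (n + 1)) (not_le.mpr hkey)
  -- main Cauchy argument
  intro ε' hε'
  obtain ⟨δ0, hδ0, hMK'⟩ := hMK (ε' / 5) (by linarith)
  set δ : ℝ := min δ0 (ε' / 5) with hδdef
  have hδ : 0 < δ := lt_min hδ0 (by linarith)
  obtain ⟨N, hN⟩ := exists_lt_of_ciInf_lt (show (⨅ k, s k) < δ by rw [hrz]; exact hδ)
  refine ⟨N, ?_⟩
  have claim : ∀ m, N ≤ m → (dist (x N) (x m) + dist (y N) (y m)) / 2 < ε' / 5 + δ := by
    intro m hm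
    induction m, hm using Nat.le_induction with
    | base => simp only [dist_self]; linarith
    | succ m hm ih =>
      rcases lt_or_ge ((dist (x N) (x m) + dist (y N) (y m)) / 2) (ε' / 5) with hlt | hge
      · have t1 := dist_triangle (x N) (x m) (x (m + 1))
        have t2 := dist_triangle (y N) (y m) (y (m + 1))
        have hsm : (dist (x (m + 1)) (x m) + dist (y (m + 1)) (y m)) / 2 ≤ s N := hsA hm
        have hc1 := dist_comm (x m) (x (m + 1))
        have hc2 := dist_comm (y m) (y (m + 1))
        linarith
      · have hge' : ε' / 5 ≤ (dist (x m) (x N) + dist (y m) (y N)) / 2 := by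
          rw [dist_comm (x m) (x N), dist_comm (y m) (y N)]; exact hge
        have hub : (dist (x m) (x N) + dist (y m) (y N)) / 2 < ε' / 5 + δ0 := by
          rw [dist_comm (x m) (x N), dist_comm (y m) (y N)]
          have : δ ≤ δ0 := min_le_left _ _
          linarith
        have hkey := hMK' (x m) (y m) (x N) (y N) (hxm hm) (hya hm) hge' hub
        rw [← hx m, ← hy m, ← hx N, ← hy N] at hkey
        have t1 := dist_triangle (x N) (x (N + 1)) (x (m + 1))
        have t2 := dist_triangle (y N) (y (N + 1)) (y (m + 1))
        have hsN : (dist (x (N + 1)) (x N) + dist (y (N + 1)) (y N)) / 2 < δ := hN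
        have hc1 := dist_comm (x (N + 1)) (x N)
        have hc2 := dist_comm (y (N + 1)) (y N)
        have hc3 := dist_comm (x (N + 1)) (x (m + 1))
        have hc4 := dist_comm (y (N + 1)) (y (m + 1))
        have hc5 := dist_comm (x (m + 1)) (x (N + 1))
        have hc6 := dist_comm (y (m + 1)) (y (N + 1))
        linarith
  intro m hm n hn
  have h1 := claim m hm
  have h2 := claim n hn
  have t1 := dist_triangle (x m) (x N) (x n)
  have t2 := dist_triangle (y m) (y N) (y n)
  have hc1 := dist_comm (x N) (x m)
  have hc2 := dist_comm (y N) (y m)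
  have hδε : δ ≤ ε' / 5 := min_le_right _ _
  show (dist (x m) (x n) + dist (y m) (y n)) / 2 < ε'
  linarith
end

section
/- Let X = ℝ with the usual order and metric d(x,y) = |x−y|, and let F : ℝ × ℝ → ℝ be defined by F(x,y) = (x − 3y)/5. Then F does NOT satisfy Samet's generalized Meir–Keeler condition: it is not the case that for each ε > 0 there exists δ(ε) > 0 such that for all x,y,u,v ∈ ℝ with x ≥ u and y ≤ v, ε ≤ (1/2)[|x−u|+|y−v|] < ε+δ(ε) implies |F(x,y) − F(u,v)| < ε. -/
theorem example_not_samet_meir_keeler :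
    let F : ℝ → ℝ → ℝ := fun x y => (x - 3 * y) / 5
    ¬ (∀ ε > (0 : ℝ), ∃ δ > (0 : ℝ), ∀ x y u v : ℝ, u ≤ x → y ≤ v →
        ε ≤ (|x - u| + |y - v|) / 2 → (|x - u| + |y - v|) / 2 < ε + δ →
        |F x y - F u v| < ε) := by
  intro F h
  obtain ⟨δ, hδ, H⟩ := h 1 one_pos
  -- `(x, y) = (0, 0)`, `(u, v) = (0, 2)` has mean distance exactly `1`, admissible for every `δ`,
  -- yet `|F 0 0 - F 0 2| = 6 / 5`.
  have hF := H 0 0 0 2 le_rfl zero_le_two (by norm_num) (by norm_num; linarith)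
  norm_num [F] at hF
end
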